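/- Let G and E be d×d Hermitian matrices with G positive semidefinite. Then ‖G − [G + E]₊‖_tr ≤ 2·‖E‖_tr, where [·]₊ denotes the positive part of a Hermitian matrix and ‖·‖_tr is the trace norm. -/

import Mathlib

/-!
Write `H = G + E`. Since `[H]₊ = H + [H]₋`, we get `G - [H]₊ = -(E + [H]₋)`, so by the triangle
inequality it suffices to show `‖[H]₋‖_tr ≤ ‖E‖_tr`. Both the triangle inequality and this bound
rest on one fact: the diagonal of a Hermitian `X` in any orthonormal basis has `ℓ¹`-norm at most
`‖X‖_tr`, because each diagonal entry is an average of the eigenvalues with weights `|Wⱼᵢ|²`,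
`W` being the unitary change of basis. In the eigenbasis of `H` the eigenvalues are `μᵢ = Gᵢᵢ + Eᵢᵢ` with `Gᵢᵢ ≥ 0`, hence
`‖[H]₋‖_tr = ∑ max (-μᵢ) 0 ≤ ∑ |Eᵢᵢ| ≤ ‖E‖_tr`.
-/

open scoped ComplexOrder Matrix BigOperators Kronecker
open MeasureTheory

noncomputable section

/-- The square root of a positive semidefinite matrix, as defined in Mathlib (Dec 2024). -/
def Matrix.PosSemidef.sqrt {n : Type*} [Fintype n] [DecidableEq n] {A : Matrix n n ℂ}
    (hA : A.PosSemidef) : Matrix n n ℂ :=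
  (hA.1.eigenvectorUnitary : Matrix n n ℂ) *
    Matrix.diagonal ((↑) ∘ (fun x : ℝ => Real.sqrt x) ∘ hA.1.eigenvalues) *
    (star hA.1.eigenvectorUnitary : Matrix n n ℂ)

/-- Trace norm of a complex square matrix: `Tr √(XᴴX)`. -/
def traceNorm {ι : Type*} [Fintype ι] [DecidableEq ι] (X : Matrix ι ι ℂ) : ℝ :=
  ((Matrix.posSemidef_conjTranspose_mul_self X).sqrt.trace).re

/-- Frobenius norm `√(Tr(XᴴX))`. -/
def frobNorm {ι : Type*} [Fintype ι] [DecidableEq ι] (X : Matrix ι ι ℂ) : ℝ :=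
  Real.sqrt ((Xᴴ * X).trace).re

/-- Operator norm (largest singular value), realized as the norm of the induced
continuous linear map on Euclidean space. -/
def opNorm {ι : Type*} [Fintype ι] [DecidableEq ι] (X : Matrix ι ι ℂ) : ℝ :=
  ‖Matrix.toEuclideanCLM (𝕜 := ℂ) X‖

/-- Euclidean norm on `ℝ^m`. -/
def l2norm {m : ℕ} (z : Fin m → ℝ) : ℝ :=
  Real.sqrt (∑ i, (z i) ^ 2)

open Classical in
/-- The positive part `[H]₊` of a Hermitian matrix (junk value `0` otherwise). -/
def matPosPart {ι : Type*} [Fintype ι] [DecidableEq ι] (H : Matrix ι ι ℂ) :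
    Matrix ι ι ℂ :=
  if h : H.IsHermitian then
    (h.eigenvectorUnitary : Matrix ι ι ℂ) *
      Matrix.diagonal (fun i => ((max (h.eigenvalues i) 0 : ℝ) : ℂ)) *
      (star h.eigenvectorUnitary : Matrix ι ι ℂ)
  else 0

open Classical in
/-- The positive semidefinite square root of a positive semidefinite matrix
(junk value `0` otherwise). -/
def psdSqrt {ι : Type*} [Fintype ι] [DecidableEq ι] (A : Matrix ι ι ℂ) :
    Matrix ι ι ℂ :=
  if h : A.PosSemidef then h.sqrt else 0

open scoped MatrixOrder

section

variable {ι : Type*} [Fintype ι] [DecidableEq ι]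

lemma Matrix.PosSemidef.sqrt_eq_cfcSqrt {A : Matrix ι ι ℂ} (hA : A.PosSemidef) :
    hA.sqrt = CFC.sqrt A := by
  rw [CFC.sqrt_eq_cfc, cfc_nnreal_eq_real _ A, hA.1.cfc_eq]
  simp only [Matrix.PosSemidef.sqrt, Matrix.IsHermitian.cfc, Unitary.conjStarAlgAut_apply]
  congr 3
  funext i
  simp [Real.coe_toNNReal', max_eq_left (hA.eigenvalues_nonneg i)]

lemma traceNorm_eq_re_trace_abs (X : Matrix ι ι ℂ) : traceNorm X = (CFC.abs X).trace.re := by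
  rw [traceNorm, Matrix.PosSemidef.sqrt_eq_cfcSqrt]
  rfl

lemma traceNorm_neg (X : Matrix ι ι ℂ) : traceNorm (-X) = traceNorm X := by
  simp only [traceNorm_eq_re_trace_abs, CFC.abs_neg]

lemma Matrix.PosSemidef.traceNorm_eq_re_trace {X : Matrix ι ι ℂ} (hX : X.PosSemidef) :
    traceNorm X = X.trace.re := by
  rw [traceNorm_eq_re_trace_abs, CFC.abs_of_nonneg X hX.nonneg]

lemma Matrix.trace_unitary_conj {R : Type*} [CommRing R] [StarRing R]
    (U : Matrix.unitaryGroup ι R) (D : Matrix ι ι R) :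
    ((U : Matrix ι ι R) * D * star (U : Matrix ι ι R)).trace = D.trace := by
  rw [Matrix.trace_mul_cycle, Matrix.UnitaryGroup.star_mul_self, Matrix.one_mul]

lemma Matrix.IsHermitian.trace_cfc {X : Matrix ι ι ℂ} (hX : X.IsHermitian) (f : ℝ → ℝ) :
    (cfc f X).trace = ∑ i, (f (hX.eigenvalues i) : ℂ) := by
  rw [hX.cfc_eq, Matrix.IsHermitian.cfc, Unitary.conjStarAlgAut_apply, Matrix.trace_unitary_conj,
    Matrix.trace_diagonal]
  rfl

lemma Matrix.IsHermitian.traceNorm_eq_sum_abs_eigenvalues {X : Matrix ι ι ℂ}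
    (hX : X.IsHermitian) : traceNorm X = ∑ i, |hX.eigenvalues i| := by
  rw [traceNorm_eq_re_trace_abs, CFC.abs_eq_cfc_norm X hX.isSelfAdjoint, hX.trace_cfc]
  simp

lemma Matrix.IsHermitian.re_diag_star_eigenvectorUnitary_conj {X : Matrix ι ι ℂ}
    (hX : X.IsHermitian) (i : ι) :
    ((star (hX.eigenvectorUnitary : Matrix ι ι ℂ) * X * hX.eigenvectorUnitary) i i).re =
      hX.eigenvalues i := by
  have h := hX.conjStarAlgAut_star_eigenvectorUnitary
  rw [Unitary.conjStarAlgAut_star_apply] at h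
  simp [h]

section RCLike

variable {𝕜 : Type*} [RCLike 𝕜]

lemma Matrix.UnitaryGroup.sum_norm_sq_row (W : Matrix.unitaryGroup ι 𝕜) (j : ι) :
    ∑ i, ‖(W : Matrix ι ι 𝕜) j i‖ ^ 2 = 1 := by
  have h : ((W : Matrix ι ι 𝕜) * star (W : Matrix ι ι 𝕜)) j j = 1 := by
    rw [Unitary.mul_star_self_of_mem W.2, Matrix.one_apply_eq]
  rw [Matrix.mul_apply] at h
  simp only [Matrix.star_apply, RCLike.star_def, RCLike.mul_conj] at h
  exact_mod_cast h

lemma Matrix.re_diag_star_mul_diagonal_mul (W : Matrix ι ι 𝕜) (a : ι → ℝ) (i : ι) :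
    RCLike.re ((star W * Matrix.diagonal (fun j => (a j : 𝕜)) * W) i i) =
      ∑ j, a j * ‖W j i‖ ^ 2 := by
  rw [Matrix.mul_apply, map_sum]
  refine Finset.sum_congr rfl fun j _ => ?_
  rw [Matrix.mul_diagonal, Matrix.star_apply, mul_right_comm, RCLike.star_def, RCLike.conj_mul,
    ← RCLike.ofReal_pow, ← RCLike.ofReal_mul, RCLike.ofReal_re, mul_comm]

lemma Matrix.UnitaryGroup.sum_abs_re_diag_star_mul_diagonal_mul_le (W : Matrix.unitaryGroup ι 𝕜)
    (a : ι → ℝ) :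
    ∑ i, |RCLike.re ((star (W : Matrix ι ι 𝕜) * Matrix.diagonal (fun j => (a j : 𝕜)) * W) i i)| ≤
      ∑ j, |a j| := by
  simp only [Matrix.re_diag_star_mul_diagonal_mul]
  calc ∑ i, |∑ j, a j * ‖(W : Matrix ι ι 𝕜) j i‖ ^ 2|
      ≤ ∑ i, ∑ j, |a j| * ‖(W : Matrix ι ι 𝕜) j i‖ ^ 2 := by
        gcongr with i
        refine (Finset.abs_sum_le_sum_abs _ _).trans_eq (Finset.sum_congr rfl fun j _ => ?_)
        rw [abs_mul, abs_of_nonneg (sq_nonneg ‖(W : Matrix ι ι 𝕜) j i‖)]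
    _ = ∑ j, |a j| := by
        rw [Finset.sum_comm]
        simp only [← Finset.mul_sum, Matrix.UnitaryGroup.sum_norm_sq_row, mul_one]

end RCLike

lemma Matrix.IsHermitian.sum_abs_re_diag_conj_le_traceNorm {X : Matrix ι ι ℂ} (hX : X.IsHermitian)
    (V : Matrix.unitaryGroup ι ℂ) :
    ∑ i, |((star (V : Matrix ι ι ℂ) * X * V) i i).re| ≤ traceNorm X := by
  set U := hX.eigenvectorUnitary
  have hconj : star (V : Matrix ι ι ℂ) * X * V =
      star (star (U : Matrix ι ι ℂ) * V) * Matrix.diagonal (fun j => (hX.eigenvalues j : ℂ)) *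
        (star (U : Matrix ι ι ℂ) * V) := by
    conv_lhs => rw [hX.spectral_theorem, Unitary.conjStarAlgAut_apply]
    rw [star_mul, star_star]
    simp only [Matrix.mul_assoc]
    rfl
  rw [hconj, hX.traceNorm_eq_sum_abs_eigenvalues]
  exact Matrix.UnitaryGroup.sum_abs_re_diag_star_mul_diagonal_mul_le (star U * V) _

lemma Matrix.IsHermitian.traceNorm_add_le {X Y : Matrix ι ι ℂ} (hX : X.IsHermitian)
    (hY : Y.IsHermitian) :
    traceNorm (X + Y) ≤ traceNorm X + traceNorm Y := by
  have hXY := hX.add hY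
  set T := hXY.eigenvectorUnitary
  calc traceNorm (X + Y)
      = ∑ i, |((star (T : Matrix ι ι ℂ) * X * T) i i).re +
          ((star (T : Matrix ι ι ℂ) * Y * T) i i).re| := by
        rw [hXY.traceNorm_eq_sum_abs_eigenvalues]
        refine Finset.sum_congr rfl fun i _ => ?_
        rw [← hXY.re_diag_star_eigenvectorUnitary_conj, Matrix.mul_add, Matrix.add_mul]
        rfl
    _ ≤ ∑ i, |((star (T : Matrix ι ι ℂ) * X * T) i i).re| +
          ∑ i, |((star (T : Matrix ι ι ℂ) * Y * T) i i).re| := by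
        rw [← Finset.sum_add_distrib]
        gcongr
        exact abs_add_le _ _
    _ ≤ traceNorm X + traceNorm Y := by
        gcongr
        · exact hX.sum_abs_re_diag_conj_le_traceNorm T
        · exact hY.sum_abs_re_diag_conj_le_traceNorm T

lemma matPosPart_eq_posPart {H : Matrix ι ι ℂ} (hH : H.IsHermitian) : matPosPart H = H⁺ := by
  rw [CFC.posPart_def, cfcₙ_eq_cfc, matPosPart, dif_pos hH, hH.cfc_eq, Matrix.IsHermitian.cfc,
    Unitary.conjStarAlgAut_apply]
  congr 3

lemma Matrix.posSemidef_negPart (H : Matrix ι ι ℂ) : H⁻.PosSemidef :=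
  Matrix.nonneg_iff_posSemidef.mp (CFC.negPart_nonneg H)

lemma Matrix.PosSemidef.traceNorm_negPart_add_le {G E : Matrix ι ι ℂ} (hG : G.PosSemidef)
    (hE : E.IsHermitian) :
    traceNorm (G + E)⁻ ≤ traceNorm E := by
  have hH := hG.1.add hE
  set V := hH.eigenvectorUnitary
  have hdiag (i : ι) : (hH.eigenvalues i)⁻ ≤ |((star (V : Matrix ι ι ℂ) * E * V) i i).re| := by
    have hGi : 0 ≤ ((star (V : Matrix ι ι ℂ) * G * V) i i).re := by
      have := (hG.conjTranspose_mul_mul_same (V : Matrix ι ι ℂ)).diag_nonneg (i := i)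
      exact (Complex.nonneg_iff.mp this).1
    have hsplit : hH.eigenvalues i = ((star (V : Matrix ι ι ℂ) * G * V) i i).re +
        ((star (V : Matrix ι ι ℂ) * E * V) i i).re := by
      rw [← hH.re_diag_star_eigenvectorUnitary_conj, Matrix.mul_add, Matrix.add_mul]
      rfl
    rw [negPart_def]
    exact sup_le (by linarith [neg_abs_le ((star (V : Matrix ι ι ℂ) * E * V) i i).re])
      (abs_nonneg _)
  calc traceNorm (G + E)⁻ = ∑ i, (hH.eigenvalues i)⁻ := by
        rw [(Matrix.posSemidef_negPart (G + E)).traceNorm_eq_re_trace,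
          CFC.negPart_def, cfcₙ_eq_cfc, hH.trace_cfc, Complex.re_sum]
        simp only [Complex.ofReal_re]
    _ ≤ ∑ i, |((star (V : Matrix ι ι ℂ) * E * V) i i).re| := Finset.sum_le_sum fun i _ => hdiag i
    _ ≤ traceNorm E := hE.sum_abs_re_diag_conj_le_traceNorm V

end

/-- **Positive-part truncation bound** (from the proof of the fidelity-
certification theorem of "Quantum Tomography via Compressed Sensing").

For `G` positive semidefinite and `E` Hermitian,
`‖G - [G + E]₊‖_tr ≤ 2 ‖E‖_tr`. -/
theorem positive_part_truncation_bound
    {ι : Type*} [Fintype ι] [DecidableEq ι]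
    (G E : Matrix ι ι ℂ) (hG : G.PosSemidef) (hE : E.IsHermitian) :
    traceNorm (G - matPosPart (G + E)) ≤ 2 * traceNorm E := by
  have hH : (G + E).IsHermitian := hG.1.add hE
  have hdecomp : G - matPosPart (G + E) = -(E + (G + E)⁻) := by
    rw [matPosPart_eq_posPart hH,
      sub_eq_iff_eq_add.mp (CFC.posPart_sub_negPart (G + E) hH.isSelfAdjoint)]
    abel
  calc traceNorm (G - matPosPart (G + E)) = traceNorm (E + (G + E)⁻) := by
        rw [hdecomp, traceNorm_neg]
    _ ≤ traceNorm E + traceNorm (G + E)⁻ :=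
        hE.traceNorm_add_le (Matrix.posSemidef_negPart (G + E)).1
    _ ≤ 2 * traceNorm E := by linarith [hG.traceNorm_negPart_add_le hE]
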